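/- arXiv:2507.23149 — 3 statements merged into one kernel-verified Lean document; each statement's English description precedes it below -/
import Mathlib

section
/- Type II error bound: Let $b, \pi$ be probability distributions on a finite set $A$ with $d := \|\pi - b\|_2 > \tau$, and let $\hat\pi$ be the empirical distribution of $T$ i.i.d. samples from $\pi$. For $\alpha \in (0,1)$, if $T \ge \frac{2|A|}{(d-\tau)^2}\ln(2/\alpha)$ and $\delta_T = \sqrt{\frac{|A|}{2T}\ln(2/\alpha)}$, then the probability that $\|\hat\pi - b\|_2 \le \tau + \delta_T$ is at most $\alpha$. -/
/-!
Project onto the unit direction `u = (π - b) / d`. By Cauchy–Schwarz, failing to reject gives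
`⟪u, π̂ - b⟫ ≤ τ + δ_T`, while `⟪u, π - b⟫ = d`; so the empirical mean of the i.i.d. bounded
variables `u(X_t)` falls below its expectation by `ε = d - τ - δ_T ≥ (d - τ) / 2`. Two coordinates
of a unit vector differ by at most `√2`, so Hoeffding's inequality bounds this event by
`exp (-T ε²) ≤ exp (-|A| ln (2/α) / 2) ≤ α / 2`, using `|A| ≥ 2` (as `π ≠ b`).
-/

open MeasureTheory ProbabilityTheory Finset Real

section Hoeffding

variable {Ω : Type*} [MeasurableSpace Ω] {μ : Measure Ω}

lemma measureReal_sum_sub_integral_ge_le [IsProbabilityMeasure μ] {ι : Type*} {Y : ι → Ω → ℝ}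
    (hY : ∀ i, Measurable (Y i)) (hindep : iIndepFun Y μ) {m M : ℝ}
    (hbound : ∀ i ω, Y i ω ∈ Set.Icc m M) (s : Finset ι) {ε : ℝ} (hε : 0 ≤ ε) :
    μ.real {ω | ε ≤ ∑ i ∈ s, (Y i ω - μ[Y i])} ≤ exp (-2 * ε ^ 2 / (#s * (M - m) ^ 2)) := by
  have hcentered : iIndepFun (fun i ω ↦ Y i ω - μ[Y i]) μ := by
    exact hindep.comp (fun i x ↦ x - μ[Y i]) fun _ ↦ measurable_id.sub_const _
  have hsubG := HasSubgaussianMGF.measure_sum_ge_le_of_iIndepFun hcentered (s := s)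
    (fun i _ ↦ hasSubgaussianMGF_of_mem_Icc (hY i).aemeasurable (ae_of_all _ (hbound i))) hε
  refine hsubG.trans_eq (congrArg exp ?_)
  simp only [sum_const, nsmul_eq_mul, NNReal.coe_mul, NNReal.coe_natCast, NNReal.coe_pow,
    NNReal.coe_div, coe_nnnorm, Real.norm_eq_abs, div_pow, sq_abs, NNReal.coe_ofNat]
  rw [show (2 : ℝ) * (#s * ((M - m) ^ 2 / 2 ^ 2)) = #s * (M - m) ^ 2 / 2 by ring,
    div_div_eq_mul_div]
  ring

lemma integral_comp_eq_sum [IsFiniteMeasure μ] {A : Type*} [Fintype A] [MeasurableSpace A]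
    [MeasurableSingletonClass A] {X : Ω → A} (hX : Measurable X) (g : A → ℝ) :
    ∫ ω, g (X ω) ∂μ = ∑ a, μ.real {ω | X ω = a} * g a := by
  rw [← integral_map hX.aemeasurable (measurable_of_finite g).aestronglyMeasurable,
    integral_fintype .of_finite]
  refine sum_congr rfl fun a _ ↦ ?_
  rw [map_measureReal_apply hX (measurableSet_singleton a), smul_eq_mul]
  rfl

lemma measureReal_le_sum_sub_comp_le [IsProbabilityMeasure μ] {A ι : Type*} [Fintype A]
    [MeasurableSpace A] [MeasurableSingletonClass A]
    {X : ι → Ω → A} (hX : ∀ i, Measurable (X i)) (hindep : iIndepFun X μ) {p : A → ℝ}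
    (hlaw : ∀ i a, μ.real {ω | X i ω = a} = p a) {f : A → ℝ} {m M : ℝ}
    (hf : ∀ a, f a ∈ Set.Icc m M) (s : Finset ι) {ε : ℝ} (hε : 0 ≤ ε) :
    μ.real {ω | ε ≤ ∑ i ∈ s, (∑ a, p a * f a - f (X i ω))} ≤
      exp (-2 * ε ^ 2 / (#s * (M - m) ^ 2)) := by
  have hmean (i : ι) : μ[fun ω ↦ -f (X i ω)] = -∑ a, p a * f a := by
    simp only [integral_neg, integral_comp_eq_sum (hX i), hlaw]
  have h := measureReal_sum_sub_integral_ge_le (Y := fun i ω ↦ -f (X i ω))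
    (fun i ↦ ((measurable_of_finite f).comp (hX i)).neg)
    (hindep.comp (fun _ a ↦ -f a) fun _ ↦ measurable_of_finite _)
    (fun i ω ↦ ⟨neg_le_neg (hf _).2, neg_le_neg (hf _).1⟩) s hε
  simp only [hmean, sub_neg_eq_add, neg_add_eq_sub] at h
  exact h

end Hoeffding

section FiniteVectors

variable {A : Type*} [Fintype A]

lemma one_lt_card_of_ne_of_sum_eq_one {p b : A → ℝ} (hp : ∑ a, p a = 1) (hb : ∑ a, b a = 1)
    (hne : p ≠ b) : 1 < Fintype.card A := by
  by_contra! hcard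
  have : Subsingleton A := Fintype.card_le_one_iff_subsingleton.mp hcard
  exact hne <| funext fun a ↦ by
    rw [← Fintype.sum_subsingleton p a, ← Fintype.sum_subsingleton b a, hp, hb]

lemma sum_sq_div_sqrt_sum_sq {v : A → ℝ} (hv : 0 < √(∑ a, v a ^ 2)) :
    ∑ a, (v a / √(∑ a, v a ^ 2)) ^ 2 = 1 := by
  simp only [div_pow, ← sum_div]
  rw [sq_sqrt (sum_nonneg fun a _ ↦ sq_nonneg _)]
  exact div_self (sqrt_pos.mp hv).ne'

lemma exists_forall_mem_Icc_add_sqrt_two [Nonempty A] {u : A → ℝ} (hu : ∑ a, u a ^ 2 = 1) :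
    ∃ m, ∀ a, u a ∈ Set.Icc m (m + √2) := by
  obtain ⟨a₀, ha₀⟩ := Finite.exists_min u
  refine ⟨u a₀, fun a ↦ ⟨ha₀ a, ?_⟩⟩
  suffices (u a - u a₀) ^ 2 ≤ 2 by linarith [(le_abs_self _).trans (abs_le_sqrt this)]
  classical
  rcases eq_or_ne a a₀ with rfl | hne
  · norm_num
  · have hpair : u a ^ 2 + u a₀ ^ 2 ≤ 1 := by
      rw [← hu, ← sum_pair (f := fun a ↦ u a ^ 2) hne]
      exact sum_le_univ_sum_of_nonneg fun _ ↦ sq_nonneg _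
    nlinarith [sq_nonneg (u a + u a₀)]

lemma sqrt_sum_sq_sub_le_sum_mul_sub {p b q : A → ℝ} {r : ℝ}
    (hd : 0 < √(∑ a, (p a - b a) ^ 2)) (hq : √(∑ a, (q a - b a) ^ 2) ≤ r) :
    √(∑ a, (p a - b a) ^ 2) - r ≤
      ∑ a, (p a - b a) / √(∑ a, (p a - b a) ^ 2) * (p a - q a) := by
  set d := √(∑ a, (p a - b a) ^ 2)
  have hcs := sum_mul_le_sqrt_mul_sqrt univ (fun a ↦ p a - b a) (fun a ↦ q a - b a)
  have hsplit : ∑ a, (p a - b a) / d * (p a - q a) =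
      (∑ a, (p a - b a) ^ 2 - ∑ a, (p a - b a) * (q a - b a)) / d := by
    rw [← sum_sub_distrib, sum_div]
    exact sum_congr rfl fun a _ ↦ by ring
  rw [hsplit, le_div_iff₀ hd, ← sq_sqrt (sum_nonneg fun a _ ↦ sq_nonneg (p a - b a))]
  nlinarith

lemma sum_sub_comp_eq_card_mul_sum_mul_sub_empirical [DecidableEq A] {ι : Type*}
    (s : Finset ι) (x : ι → A) (p u : A → ℝ) :
    ∑ t ∈ s, (∑ a, p a * u a - u (x t)) =
      #s * ∑ a, u a * (p a - (∑ t ∈ s, if x t = a then (1 : ℝ) else 0) / #s) := by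
  rcases s.eq_empty_or_nonempty with rfl | hs
  · simp
  have hcount : ∑ a, u a * ∑ t ∈ s, (if x t = a then (1 : ℝ) else 0) = ∑ t ∈ s, u (x t) := by
    simp only [mul_sum, mul_ite, mul_one, mul_zero]
    rw [sum_comm]
    simp
  simp only [mul_sub, sum_sub_distrib, mul_div_assoc', ← sum_div, hcount, sum_const, nsmul_eq_mul]
  rw [mul_div_cancel_left₀ _ (by simpa using hs.ne_empty)]
  simp only [mul_comm (u _)]

end FiniteVectors

lemma sqrt_div_mul_le_half {k L D T : ℝ} (hD : 0 < D) (hT : 0 < T) (h : 2 * k / D ^ 2 * L ≤ T) :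
    √(k / (2 * T) * L) ≤ D / 2 := by
  rw [sqrt_le_left (by positivity)]
  calc k / (2 * T) * L = 2 * k / D ^ 2 * L * (D ^ 2 / (4 * T)) := by field_simp; ring
    _ ≤ T * (D ^ 2 / (4 * T)) := by gcongr
    _ = (D / 2) ^ 2 := by field_simp; ring

lemma le_mul_sq_of_two_mul_div_sq_mul_le {k L D T ε : ℝ} (hk : 2 ≤ k) (hL : 0 ≤ L) (hD : 0 < D)
    (h : 2 * k / D ^ 2 * L ≤ T) (hε : D / 2 ≤ ε) : L ≤ T * ε ^ 2 := by
  have hT : 0 ≤ T := le_trans (by positivity) h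
  calc L ≤ 2 * k / D ^ 2 * L * (D / 2) ^ 2 := by
        rw [show 2 * k / D ^ 2 * L * (D / 2) ^ 2 = k / 2 * L by field_simp]
        nlinarith
    _ ≤ T * ε ^ 2 := by gcongr

theorem type_two_error_bound_general
    {A : Type*} [Fintype A] [Nonempty A] [DecidableEq A]
    [MeasurableSpace A] [MeasurableSingletonClass A]
    {Ω : Type*} [MeasurableSpace Ω] (μ : Measure Ω) [IsProbabilityMeasure μ]
    (T : ℕ) (hT : 0 < T)
    (X : Fin T → Ω → A) (hmeas : ∀ t, Measurable (X t))
    (hindep : iIndepFun X μ)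
    (pi : A → ℝ) (hsum : ∑ a, pi a = 1)
    (hlaw : ∀ t a, (μ {ω | X t ω = a}).toReal = pi a)
    (b : A → ℝ) (hbsum : ∑ a, b a = 1)
    (tau alpha : ℝ) (htau : 0 < tau)
    (halpha : alpha ∈ Set.Ioo (0 : ℝ) 1)
    (halt : tau < Real.sqrt (∑ a : A, (pi a - b a) ^ 2))
    (hTbig : 2 * (Fintype.card A : ℝ) /
        (Real.sqrt (∑ a : A, (pi a - b a) ^ 2) - tau) ^ 2 * Real.log (2 / alpha) ≤ T) :
    (μ {ω | Real.sqrt (∑ a : A,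
          ((∑ t, if X t ω = a then (1 : ℝ) else 0) / T - b a) ^ 2) ≤
        tau + Real.sqrt ((Fintype.card A : ℝ) / (2 * T) * Real.log (2 / alpha))}).toReal ≤
      alpha := by
  obtain ⟨hα₀, hα₁⟩ := halpha
  set d := √(∑ a, (pi a - b a) ^ 2)
  set δ := √((Fintype.card A : ℝ) / (2 * T) * log (2 / alpha))
  have hd : 0 < d := htau.trans halt
  have hδ : δ ≤ (d - tau) / 2 := sqrt_div_mul_le_half (sub_pos.2 halt) (by positivity) hTbig
  set u : A → ℝ := fun a ↦ (pi a - b a) / d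
  obtain ⟨m, hm⟩ := exists_forall_mem_Icc_add_sqrt_two (sum_sq_div_sqrt_sum_sq hd)
  have hevent : {ω | √(∑ a, ((∑ t, if X t ω = a then (1 : ℝ) else 0) / T - b a) ^ 2) ≤ tau + δ} ⊆
      {ω | T * (d - (tau + δ)) ≤ ∑ t, (∑ a, pi a * u a - u (X t ω))} := fun ω hω ↦ by
    have hcount := sum_sub_comp_eq_card_mul_sum_mul_sub_empirical univ (X · ω) pi u
    rw [card_univ, Fintype.card_fin] at hcount
    rw [Set.mem_ofPred_eq, hcount]
    exact mul_le_mul_of_nonneg_left (sqrt_sum_sq_sub_le_sum_mul_sub hd hω) T.cast_nonneg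
  have hcard : (2 : ℝ) ≤ Fintype.card A := by
    have := one_lt_card_of_ne_of_sum_eq_one hsum hbsum fun h ↦ by simp [d, h] at hd
    exact_mod_cast this
  have hlog : log (2 / alpha) ≤ T * (d - (tau + δ)) ^ 2 :=
    le_mul_sq_of_two_mul_div_sq_mul_le hcard (log_nonneg (by rw [le_div_iff₀ hα₀]; linarith))
      (sub_pos.2 halt) hTbig (by linarith)
  have hrange : (m + √2 - m) ^ 2 = 2 := by rw [add_sub_cancel_left, sq_sqrt zero_le_two]
  calc μ.real _ ≤ μ.real {ω | T * (d - (tau + δ)) ≤ ∑ t, (∑ a, pi a * u a - u (X t ω))} :=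
        measureReal_mono hevent
    _ ≤ exp (-2 * (T * (d - (tau + δ))) ^ 2 / (#univ * (m + √2 - m) ^ 2)) :=
      measureReal_le_sum_sub_comp_le hmeas hindep hlaw hm univ
        (mul_nonneg T.cast_nonneg (by linarith))
    _ = exp (-(T * (d - (tau + δ)) ^ 2)) := by
      rw [card_univ, Fintype.card_fin, hrange]
      field_simp
    _ ≤ exp (-log (2 / alpha)) := exp_le_exp.2 (neg_le_neg hlog)
    _ = alpha / 2 := by rw [exp_neg, exp_log (by positivity), inv_div]
    _ ≤ alpha := by linarith

/-- Type II error bound: if `d := ‖π - b‖₂ > τ` and the sample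
size satisfies `T ≥ (2|A|/(d-τ)²)·ln(2/α)`, then the test fails to reject
(i.e. `‖π̂ - b‖₂ ≤ τ + δ_T` with `δ_T = √((|A|/(2T))·ln(2/α))`) with
probability at most `α`. -/
theorem type_two_error_bound
    {A : Type*} [Fintype A] [Nonempty A] [DecidableEq A]
    [MeasurableSpace A] [MeasurableSingletonClass A]
    {Ω : Type*} [MeasurableSpace Ω] (μ : Measure Ω) [IsProbabilityMeasure μ]
    (T : ℕ) (hT : 0 < T)
    (X : Fin T → Ω → A) (hmeas : ∀ t, Measurable (X t))
    (hindep : iIndepFun X μ)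
    (pi : A → ℝ) (hpos : ∀ a, 0 ≤ pi a) (hsum : ∑ a, pi a = 1)
    (hlaw : ∀ t a, (μ {ω | X t ω = a}).toReal = pi a)
    (b : A → ℝ) (hbpos : ∀ a, 0 ≤ b a) (hbsum : ∑ a, b a = 1)
    (tau alpha : ℝ) (htau : 0 < tau)
    (halpha : alpha ∈ Set.Ioo (0 : ℝ) 1)
    (halt : tau < Real.sqrt (∑ a : A, (pi a - b a) ^ 2))
    (hTbig : 2 * (Fintype.card A : ℝ) /
        (Real.sqrt (∑ a : A, (pi a - b a) ^ 2) - tau) ^ 2 * Real.log (2 / alpha) ≤ T) :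
    (μ {ω | Real.sqrt (∑ a : A,
          ((∑ t, if X t ω = a then (1 : ℝ) else 0) / T - b a) ^ 2) ≤
        tau + Real.sqrt ((Fintype.card A : ℝ) / (2 * T) * Real.log (2 / alpha))}).toReal ≤
      alpha :=
  type_two_error_bound_general μ T hT X hmeas hindep pi hsum hlaw b hbsum tau alpha htau halpha halt
    hTbig
end

section
/- The softmax (logistic smooth best response) map with temperature $\sigma > 0$ is $(1/\sigma)$-Lipschitz in $\ell_2$ norm: for any finite action set $A_i$ and any utility vectors $u, u' \in \mathbb{R}^{A_i}$, $\|\mathrm{softmax}(u/\sigma) - \mathrm{softmax}(u'/\sigma)\|_2 \le \frac{1}{\sigma}\|u - u'\|_2$, where $\mathrm{softmax}(v)(a) = e^{v(a)} / \sum_{a'} e^{v(a')}$. -/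
/-!
The Jacobian of `softmax` at `x` is `diag p - p pᵀ` with `p = softmax x` a probability vector.
Writing `m = ⟨p, w⟩`, its value at `w` has squared `ℓ²` norm
`∑ pₐ² (wₐ - m)² ≤ ∑ pₐ (wₐ - m)² = ∑ pₐ wₐ² - m² ≤ ‖w‖²`, so the Jacobian has operator norm at
most `1`, and the mean value inequality makes `softmax` `1`-Lipschitz for the `ℓ²` norm.
Rescaling the utilities by `1 / σ` gives the constant `1 / σ`.
-/

/-- The softmax map on a finite set. -/
noncomputable def softmax {A : Type*} [Fintype A] (v : A → ℝ) : A → ℝ :=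
  fun a => Real.exp (v a) / ∑ a' : A, Real.exp (v a')

open Finset

section

variable {A : Type*} [Fintype A]

theorem sum_sq_mul_sub_weighted_mean_le (p w : A → ℝ) (hp : ∀ a, 0 ≤ p a)
    (hp_sum : ∑ a, p a ≤ 1) :
    ∑ a, (p a * (w a - ∑ b, p b * w b)) ^ 2 ≤ ∑ a, w a ^ 2 := by
  set m := ∑ b, p b * w b with hm
  have hp_le_one (a : A) : p a ≤ 1 :=
    (single_le_sum (fun b _ => hp b) (mem_univ a)).trans hp_sum
  have variance_eq :
      ∑ a, p a * (w a - m) ^ 2 = ∑ a, p a * w a ^ 2 - 2 * m * m + m ^ 2 * ∑ a, p a := by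
    have expand (a : A) :
        p a * (w a - m) ^ 2 = p a * w a ^ 2 - 2 * m * (p a * w a) + m ^ 2 * p a := by
      ring
    rw [sum_congr rfl fun a _ => expand a, sum_add_distrib, sum_sub_distrib, ← mul_sum, ← mul_sum,
      ← hm]
  calc ∑ a, (p a * (w a - m)) ^ 2
      ≤ ∑ a, p a * (w a - m) ^ 2 := sum_le_sum fun a _ => by
        rw [mul_pow]
        exact mul_le_mul_of_nonneg_right (pow_le_of_le_one (hp a) (hp_le_one a) two_ne_zero)
          (sq_nonneg _)
    _ ≤ ∑ a, p a * w a ^ 2 := by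
        rw [variance_eq]; nlinarith [sq_nonneg m]
    _ ≤ ∑ a, w a ^ 2 := sum_le_sum fun a _ =>
        mul_le_of_le_one_left (sq_nonneg _) (hp_le_one a)

theorem softmax_nonneg (v : A → ℝ) (a : A) : 0 ≤ softmax v a := by
  unfold softmax; positivity

theorem sum_softmax_le_one (v : A → ℝ) : ∑ a, softmax v a ≤ 1 := by
  simp only [softmax, ← sum_div]
  exact div_self_le_one _

noncomputable def softmaxFDeriv (x : A → ℝ) : (A → ℝ) →L[ℝ] (A → ℝ) :=
  ContinuousLinearMap.pi fun a =>
    softmax x a • (ContinuousLinearMap.proj a - ∑ b, softmax x b • ContinuousLinearMap.proj b)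

theorem softmaxFDeriv_apply (x w : A → ℝ) (a : A) :
    softmaxFDeriv x w a = softmax x a * (w a - ∑ b, softmax x b * w b) := by
  simp [softmaxFDeriv]

theorem sum_exp_pos [Nonempty A] (v : A → ℝ) : 0 < ∑ a, Real.exp (v a) :=
  sum_pos (fun _ _ => Real.exp_pos _) univ_nonempty

theorem hasFDerivAt_softmax [Nonempty A] (x : A → ℝ) :
    HasFDerivAt softmax (softmaxFDeriv x) x := by
  refine hasFDerivAt_pi.2 fun a => ?_
  have hS := (sum_exp_pos x).ne'
  have h_sum : HasFDerivAt (fun v : A → ℝ => ∑ b, Real.exp (v b))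
      (∑ b, Real.exp (x b) • ContinuousLinearMap.proj b) x :=
    HasFDerivAt.fun_sum fun b _ => (hasFDerivAt_apply b x).exp
  have h_quot := (hasFDerivAt_apply a x).exp.mul ((hasFDerivAt_inv hS).comp x h_sum)
  refine h_quot.congr_fderiv (ContinuousLinearMap.ext fun w => ?_)
  simp [softmax, div_mul_eq_mul_div, ← sum_div, ← sum_mul]
  field_simp
  ring

theorem norm_softmaxFDeriv_euclidean_le (x : A → ℝ) :
    ‖((EuclideanSpace.equiv A ℝ).symm : (A → ℝ) →L[ℝ] EuclideanSpace ℝ A) ∘L softmaxFDeriv x ∘L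
      (EuclideanSpace.equiv A ℝ : EuclideanSpace ℝ A →L[ℝ] (A → ℝ))‖ ≤ 1 := by
  refine ContinuousLinearMap.opNorm_le_bound _ zero_le_one fun w => ?_
  rw [one_mul, ← sq_le_sq₀ (norm_nonneg _) (norm_nonneg _), EuclideanSpace.real_norm_sq_eq,
    EuclideanSpace.real_norm_sq_eq]
  simpa [softmaxFDeriv_apply] using
    sum_sq_mul_sub_weighted_mean_le (softmax x) w (softmax_nonneg x) (sum_softmax_le_one x)

-- `A → ℝ` carries the sup norm; the `ℓ²` estimate lives on `EuclideanSpace ℝ A`.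
theorem lipschitzWith_one_softmax_euclidean :
    LipschitzWith 1 fun x : EuclideanSpace ℝ A => WithLp.toLp 2 (softmax (WithLp.ofLp x)) := by
  rcases isEmpty_or_nonempty A with _ | _
  · exact fun x y => by simp [Subsingleton.elim x y]
  let e := EuclideanSpace.equiv A ℝ
  have hderiv (x : EuclideanSpace ℝ A) :
      HasFDerivAt (fun x : EuclideanSpace ℝ A => WithLp.toLp 2 (softmax (WithLp.ofLp x)))
        ((e.symm : (A → ℝ) →L[ℝ] EuclideanSpace ℝ A) ∘L softmaxFDeriv (e x) ∘L
          (e : EuclideanSpace ℝ A →L[ℝ] (A → ℝ))) x :=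
    e.symm.hasFDerivAt.comp x ((hasFDerivAt_softmax (e x)).comp x e.hasFDerivAt)
  refine lipschitzOnWith_univ.1 (convex_univ.lipschitzOnWith_of_nnnorm_hasFDerivWithin_le
    (fun x _ => (hderiv x).hasFDerivWithinAt) fun x _ => ?_)
  exact_mod_cast norm_softmaxFDeriv_euclidean_le (e x)

end

theorem softmax_lipschitz_general
    {A : Type*} [Fintype A]
    (sigma : ℝ) (hsigma : 0 < sigma) (u u' : A → ℝ) :
    Real.sqrt (∑ a : A,
        (softmax (fun b => u b / sigma) a - softmax (fun b => u' b / sigma) a) ^ 2) ≤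
      (1 / sigma) * Real.sqrt (∑ a : A, (u a - u' a) ^ 2) := by
  have h := lipschitzWith_one_softmax_euclidean.dist_le_mul
    (WithLp.toLp 2 fun b => u b / sigma) (WithLp.toLp 2 fun b => u' b / sigma)
  have hscale : (WithLp.toLp 2 fun b => u b / sigma) - WithLp.toLp 2 (fun b => u' b / sigma) =
      sigma⁻¹ • (WithLp.toLp 2 (u - u') : EuclideanSpace ℝ A) := by
    ext a; simp [div_eq_inv_mul, mul_sub]
  rw [dist_eq_norm, dist_eq_norm, hscale, norm_smul, EuclideanSpace.norm_eq,
    EuclideanSpace.norm_eq] at h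
  simpa [abs_of_pos hsigma] using h

/-- the softmax smooth best response with temperature `σ > 0` is
`(1/σ)`-Lipschitz in `ℓ₂` norm as a function of the utility vector. -/
theorem softmax_lipschitz
    {A : Type*} [Fintype A] [Nonempty A]
    (sigma : ℝ) (hsigma : 0 < sigma) (u u' : A → ℝ) :
    Real.sqrt (∑ a : A,
        (softmax (fun b => u b / sigma) a - softmax (fun b => u' b / sigma) a) ^ 2) ≤
      (1 / sigma) * Real.sqrt (∑ a : A, (u a - u' a) ^ 2) :=
  softmax_lipschitz_general sigma hsigma u u'
end

section
/- Existence of a fixed point of the smooth best response: For any finite normal-form game $(I, (A_i), (u_i))$ and temperature $\sigma > 0$, there exists a joint mixed strategy profile $\pi^* \in \prod_i \Delta(A_i)$ such that for every player $i$ and action $a_i$, $\pi_i^*(a_i) = \exp(U_i(a_i, \pi^*_{-i})/\sigma) / \sum_{a_i'} \exp(U_i(a_i', \pi^*_{-i})/\sigma)$. -/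
/-!
Brouwer's theorem for `C¹` maps, by the Milnor–Rogers argument. If `f` had no fixed point in a
ball `B` containing its range, following the ray from `f x` through `x` to the boundary sphere
would give a `C¹` retraction `r` of a neighbourhood of `B` onto the sphere. For
`g t = id + t • (r - id)`, the integral `∫ x in B, det (D (g t) x)` is a polynomial in `t`. For
small `t ≥ 0` the map `g t` is a diffeomorphism of `B` onto itself, so the integral is `vol B`; at
`t = 1` it vanishes, since `D r x` takes values orthogonal to `r x`. The logit response is smooth
with bounded range, hence has a fixed point.
-/

/-- Expected utility of player `i` for playing action `ai` while opponents mix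
independently according to `pi`. -/
noncomputable def actionUtility {I : Type*} [Fintype I] [DecidableEq I]
    {A : I → Type*} [∀ i, Fintype (A i)]
    (u : ∀ i : I, (∀ j, A j) → ℝ)
    (pi : ∀ i, A i → ℝ) (i : I) (ai : A i) : ℝ :=
  ∑ aneg : (∀ j : {j : I // j ≠ i}, A j.1),
    (∏ j : {j : I // j ≠ i}, pi j.1 (aneg j)) *
      u i (fun j => if h : j = i then h ▸ ai else aneg ⟨j, h⟩)

open Filter Function Metric MeasureTheory Polynomial Set Topology
open scoped RealInnerProductSpace

theorem LinearMap.exists_natDegree_le_eval_eq_det_one_add_smul {K E : Type*} [Field K]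
    [AddCommGroup E] [Module K E] [FiniteDimensional K E] (T : E →ₗ[K] E) :
    ∃ q : K[X], q.natDegree ≤ Module.finrank K E ∧ ∀ t : K, q.eval t = (1 + t • T).det := by
  let b := Module.finBasis K E
  refine ⟨(-LinearMap.toMatrix b b T).charpolyRev, ?_, fun t => ?_⟩
  · rw [← Matrix.reverse_charpoly]
    exact (reverse_natDegree_le _).trans (by simp)
  · rw [← LinearMap.det_toMatrix b, map_add, map_smul, LinearMap.toMatrix_one,
      Matrix.charpolyRev, ← coe_evalRingHom, RingHom.map_det]
    congr 1
    ext i j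
    by_cases h : i = j <;> simp [h] <;> ring

theorem exists_eval_eq_integral_of_natDegree_le {α : Type*} [MeasurableSpace α] {μ : Measure α}
    {F : ℝ → α → ℝ} {n : ℕ}
    (hF : ∀ x, ∃ q : ℝ[X], q.natDegree ≤ n ∧ ∀ t, q.eval t = F t x)
    (hint : ∀ t, Integrable (F t) μ) :
    ∃ q : ℝ[X], ∀ t, q.eval t = ∫ x, F t x ∂μ := by
  -- Lagrange interpolation at the nodes `0, …, n` writes each `F t` as a combination of the
  -- `F j` with coefficients depending on `t` only.
  let s := Finset.range (n + 1)
  have hv : InjOn (Nat.cast : ℕ → ℝ) s := Nat.cast_injective.injOn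
  have interp : ∀ t x, F t x = ∑ j ∈ s, F j x * (Lagrange.basis s Nat.cast j).eval t := by
    intro t x
    obtain ⟨q, hdeg, hq⟩ := hF x
    have hlt : q.degree < s.card := by
      rw [Finset.card_range]
      exact degree_le_natDegree.trans_lt (by exact_mod_cast Nat.lt_succ_of_le hdeg)
    rw [← hq, Lagrange.eq_interpolate hv hlt, Lagrange.interpolate_apply, eval_finsetSum]
    simp [hq]
  refine ⟨Lagrange.interpolate s Nat.cast fun j => ∫ x, F j x ∂μ, fun t => ?_⟩
  simp_rw [interp t]
  rw [integral_finsetSum s fun j _ => (hint j).mul_const _, Lagrange.interpolate_apply,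
    eval_finsetSum]
  simp [integral_mul_const]

theorem Polynomial.eq_C_of_eventually_eval_eq {q : ℝ[X]} {a c : ℝ}
    (h : ∀ᶠ t in 𝓝[≥] a, q.eval t = c) : q = C c := by
  obtain ⟨u, hu, hsub⟩ := mem_nhdsGE_iff_exists_Ico_subset.1 h
  exact eq_of_infinite_eval_eq _ _ ((Ico_infinite hu).mono fun t ht => by simpa using hsub ht)

section Normed

variable {E : Type*} [NormedAddCommGroup E] [NormedSpace ℝ E]

theorem HasStrictFDerivAt.map_nhds_eq_of_det_ne_zero [FiniteDimensional ℝ E] {g : E → E}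
    {g' : E →L[ℝ] E} {x : E} (hg : HasStrictFDerivAt g g' x) (hdet : g'.det ≠ 0) :
    map g (𝓝 x) = 𝓝 (g x) :=
  HasStrictFDerivAt.map_nhds_eq_of_equiv
    (f' := (LinearMap.equivOfDetNeZero (g' : E →ₗ[ℝ] E) hdet).toContinuousLinearEquiv) hg

theorem injOn_add_smul_of_lipschitzOnWith {h : E → E} {s : Set E} {K : NNReal} {t : ℝ}
    (hh : LipschitzOnWith K h s) (ht : |t| * K < 1) : InjOn (fun x => x + t • h x) s := by
  intro x hx y hy hxy
  have hdist : dist x y ≤ |t| * K * dist x y :=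
    calc dist x y = ‖t • (h y - h x)‖ := by
          rw [dist_eq_norm, smul_sub]
          congr 1
          linear_combination (norm := module) hxy
      _ = |t| * dist (h x) (h y) := by rw [norm_smul, Real.norm_eq_abs, dist_eq_norm']
      _ ≤ |t| * (K * dist x y) := by gcongr; exact hh.dist_le_mul x hx y hy
      _ = |t| * K * dist x y := by ring
  exact dist_le_zero.1 (by nlinarith [dist_nonneg (x := x) (y := y)])

/-- The image meets the open ball in a relatively clopen subset. -/
theorem image_closedBall_eq_of_eqOn_sphere [ProperSpace E] {g : E → E} {R : ℝ} (hR : 0 < R)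
    (hcont : ContinuousOn g (closedBall 0 R)) (hmaps : MapsTo g (closedBall 0 R) (closedBall 0 R))
    (hfix : ∀ x ∈ sphere (0 : E) R, g x = x)
    (hopen : ∀ x ∈ ball (0 : E) R, map g (𝓝 x) = 𝓝 (g x)) :
    g '' closedBall 0 R = closedBall 0 R := by
  set S := g '' closedBall (0 : E) R
  have hS : IsClosed S := ((isCompact_closedBall 0 R).image_of_continuousOn hcont).isClosed
  have hnhds : ∀ x ∈ ball (0 : E) R, S ∈ 𝓝 (g x) := fun x hx => by
    rw [← hopen x hx]
    exact image_mem_map (closedBall_mem_nhds_of_mem hx)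
  have hinterior : ball 0 R ∩ S ⊆ interior S := by
    rintro _ ⟨hgx, ⟨x, hx, rfl⟩⟩
    refine mem_interior_iff_mem_nhds.2 (hnhds x ?_)
    rcases (mem_closedBall_zero_iff.1 hx).lt_or_eq with hlt | heq
    · exact mem_ball_zero_iff.2 hlt
    · rw [hfix x (mem_sphere_zero_iff_norm.2 heq)] at hgx
      exact absurd (mem_ball_zero_iff.1 hgx) heq.not_lt
  have hball : ball (0 : E) R ⊆ S := by
    refine subset_trans ?_ interior_subset
    refine (convex_ball (0 : E) R).isPreconnected.subset_of_closure_inter_subset isOpen_interior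
      ?_ ?_
    · have h0 : g 0 ∈ closure (ball (0 : E) R) := by
        rw [closure_ball 0 hR.ne']
        exact hmaps (mem_closedBall_self hR.le)
      obtain ⟨y, hy, hyb⟩ := mem_closure_iff.1 h0 _ isOpen_interior
        (mem_interior_iff_mem_nhds.2 (hnhds 0 (mem_ball_self hR)))
      exact ⟨y, hyb, hy⟩
    · rw [inter_comm]
      exact (inter_subset_inter_right _ (closure_minimal interior_subset hS)).trans hinterior
  refine (image_subset_iff.2 hmaps).antisymm fun y hy => ?_
  rcases (mem_closedBall_zero_iff.1 hy).lt_or_eq with hlt | heq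
  · exact hball (mem_ball_zero_iff.2 hlt)
  · exact ⟨y, hy, hfix y (mem_sphere_zero_iff_norm.2 heq)⟩

theorem eventually_forall_det_one_add_smul_pos [FiniteDimensional ℝ E] {α : Type*}
    {A : α → E →L[ℝ] E} {s : Set α} {K : ℝ} (hA : ∀ x ∈ s, ‖A x‖ ≤ K) :
    ∀ᶠ t : ℝ in 𝓝 0, ∀ x ∈ s, 0 < (1 + t • A x).det := by
  have hcont : ContinuousAt (fun T : E →L[ℝ] E => T.det) 1 :=
    ContinuousLinearMap.continuous_det.continuousAt
  obtain ⟨δ, hδ, hpos⟩ := Metric.eventually_nhds_iff.1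
    (hcont.eventually (lt_mem_nhds (a := 0) (by simp [ContinuousLinearMap.det])))
  have hsmall : ∀ᶠ t : ℝ in 𝓝 0, |t| * K < δ := by
    have : Tendsto (fun t : ℝ => |t| * K) (𝓝 0) (𝓝 0) :=
      (continuous_abs.mul continuous_const).tendsto' 0 0 (by simp)
    exact this.eventually (gt_mem_nhds hδ)
  filter_upwards [hsmall] with t ht x hx
  refine hpos ?_
  rw [dist_eq_norm, add_sub_cancel_left, norm_smul, Real.norm_eq_abs]
  calc |t| * ‖A x‖ ≤ |t| * K := by gcongr; exact hA x hx
    _ < δ := ht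

end Normed

section InnerProduct

variable {E : Type*} [NormedAddCommGroup E] [InnerProductSpace ℝ E]

theorem inner_fderiv_eq_zero_of_eventually_norm_eq {r : E → E} {x : E} {c : ℝ}
    (hr : DifferentiableAt ℝ r x) (hc : ∀ᶠ y in 𝓝 x, ‖r y‖ = c) (v : E) :
    ⟪r x, fderiv ℝ r x v⟫ = 0 := by
  have hconst : HasFDerivAt (fun y => ‖r y‖ ^ 2) (0 : E →L[ℝ] ℝ) x :=
    (hasFDerivAt_const (c ^ 2) x).congr_of_eventuallyEq (hc.mono fun y hy => by simp [hy])
  simpa using congrArg (· v) (hr.hasFDerivAt.norm_sq.unique hconst)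

theorem det_fderiv_eq_zero_of_eventually_norm_eq [FiniteDimensional ℝ E] {r : E → E} {x : E}
    {c : ℝ} (hr : DifferentiableAt ℝ r x) (hc : ∀ᶠ y in 𝓝 x, ‖r y‖ = c) (hx : r x ≠ 0) :
    (fderiv ℝ r x).det = 0 := by
  by_contra hdet
  obtain ⟨v, hv⟩ := (LinearMap.equivOfDetNeZero _ hdet).surjective (r x)
  have h := inner_fderiv_eq_zero_of_eventually_norm_eq hr hc v
  rw [show fderiv ℝ r x v = r x from hv, real_inner_self_eq_norm_sq] at h
  simp_all

/-- A quarter of the discriminant of the quadratic equation `‖x + s • d‖ ^ 2 = R ^ 2` in `s`;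
`sphereHitTime R x d` is its larger root. -/
def sphereDiscr (R : ℝ) (x d : E) : ℝ := ⟪x, d⟫ ^ 2 + ‖d‖ ^ 2 * (R ^ 2 - ‖x‖ ^ 2)

noncomputable def sphereHitTime (R : ℝ) (x d : E) : ℝ :=
  (√(sphereDiscr R x d) - ⟪x, d⟫) / ‖d‖ ^ 2

theorem norm_add_sphereHitTime_smul {R : ℝ} {x d : E} (hR : 0 ≤ R) (hd : d ≠ 0)
    (h : 0 ≤ sphereDiscr R x d) : ‖x + sphereHitTime R x d • d‖ = R := by
  have hN : 0 < ‖d‖ ^ 2 := by positivity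
  have hsq : √(sphereDiscr R x d) ^ 2 = ⟪x, d⟫ ^ 2 + ‖d‖ ^ 2 * (R ^ 2 - ‖x‖ ^ 2) :=
    Real.sq_sqrt h
  refine (sq_eq_sq₀ (norm_nonneg _) hR).1 ?_
  rw [norm_add_sq_real, real_inner_smul_right, norm_smul, mul_pow, Real.norm_eq_abs, sq_abs,
    sphereHitTime]
  field_simp
  linear_combination hsq

theorem sphereHitTime_eq_zero {R : ℝ} {x d : E} (hx : ‖x‖ = R) (h : 0 ≤ ⟪x, d⟫) :
    sphereHitTime R x d = 0 := by
  simp [sphereHitTime, sphereDiscr, hx, Real.sqrt_sq h]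

theorem inner_sub_pos_of_norm_lt {x y : E} (h : ‖y‖ < ‖x‖) : 0 < ⟪x, x - y⟫ := by
  rw [inner_sub_right, real_inner_self_eq_norm_sq]
  nlinarith [real_inner_le_norm x y, norm_nonneg y]

theorem sphereDiscr_pos {R : ℝ} {x y : E} (hx : ‖x‖ ≤ R) (hy : ‖y‖ < R) (hxy : x ≠ y) :
    0 < sphereDiscr R x (x - y) := by
  rcases hx.lt_or_eq with hlt | rfl
  · have hd : 0 < ‖x - y‖ := norm_pos_iff.2 (sub_ne_zero.2 hxy)
    have : 0 < R ^ 2 - ‖x‖ ^ 2 := by nlinarith [norm_nonneg x]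
    unfold sphereDiscr
    positivity
  · simpa [sphereDiscr] using pow_pos (inner_sub_pos_of_norm_lt hy) 2

theorem contDiff_sphereDiscr {R : ℝ} {n : WithTop ℕ∞} :
    ContDiff ℝ n (fun p : E × E => sphereDiscr R p.1 p.2) :=
  (contDiff_inner.pow 2).add (((contDiff_norm_sq ℝ).comp contDiff_snd).mul
    (contDiff_const.sub ((contDiff_norm_sq ℝ).comp contDiff_fst)))

theorem contDiffAt_sphereHitTime {R : ℝ} {x d : E} {n : WithTop ℕ∞}
    (h : 0 < sphereDiscr R x d) :
    ContDiffAt ℝ n (fun p : E × E => sphereHitTime R p.1 p.2) (x, d) := by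
  have hd : d ≠ 0 := by
    rintro rfl
    simp [sphereDiscr] at h
  refine ContDiffAt.div ?_ ((contDiff_norm_sq ℝ).comp contDiff_snd).contDiffAt (by positivity)
  exact ((Real.contDiffAt_sqrt h.ne').comp (x, d) contDiff_sphereDiscr.contDiffAt).sub
    contDiff_inner.contDiffAt

end InnerProduct

section Brouwer

variable {E : Type*} [NormedAddCommGroup E] [InnerProductSpace ℝ E] [FiniteDimensional ℝ E]

theorem setIntegral_det_one_add_smul_eq_measureReal [MeasurableSpace E] [BorelSpace E]
    (μ : Measure E) [μ.IsAddHaarMeasure] {R t : ℝ} {K : NNReal} {r : E → E}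
    {r' : E → E →L[ℝ] E} (hR : 0 < R)
    (hr : ∀ x ∈ closedBall (0 : E) R, HasStrictFDerivAt r (r' x) x)
    (hmaps : MapsTo r (closedBall 0 R) (closedBall 0 R))
    (hfix : ∀ x ∈ sphere (0 : E) R, r x = x)
    (hlip : LipschitzOnWith K (fun x => r x - x) (closedBall 0 R))
    (ht : t ∈ Icc (0 : ℝ) 1) (htK : |t| * K < 1)
    (hdet : ∀ x ∈ closedBall (0 : E) R, 0 < (1 + t • (r' x - 1)).det) :
    ∫ x in closedBall 0 R, (1 + t • (r' x - 1)).det ∂μ = μ.real (closedBall 0 R) := by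
  set B := closedBall (0 : E) R
  set g : E → E := fun x => x + t • (r x - x)
  have hg : ∀ x ∈ B, HasStrictFDerivAt g (1 + t • (r' x - 1)) x := fun x hx =>
    (hasStrictFDerivAt_id x).add (((hr x hx).sub (hasStrictFDerivAt_id x)).const_smul t)
  have himage : g '' B = B := by
    refine image_closedBall_eq_of_eqOn_sphere hR
      (fun x hx => (hg x hx).continuousAt.continuousWithinAt) (fun x hx => ?_) (fun x hx => ?_)
      (fun x hx => ?_)
    · have hconv : g x = (1 - t) • x + t • r x := by simp only [g]; module
      rw [hconv]
      exact convex_closedBall 0 R hx (hmaps hx) (by linarith [ht.2]) ht.1 (by ring)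
    · simp [g, hfix x hx]
    · exact (hg x (ball_subset_closedBall hx)).map_nhds_eq_of_det_ne_zero
        (hdet x (ball_subset_closedBall hx)).ne'
  have hcov := integral_image_eq_integral_abs_det_fderiv_smul μ measurableSet_closedBall
    (fun x hx => (hg x hx).hasFDerivAt.hasFDerivWithinAt)
    (injOn_add_smul_of_lipschitzOnWith hlip htK) fun _ => (1 : ℝ)
  rw [himage, setIntegral_const, smul_eq_mul, mul_one] at hcov
  rw [hcov]
  refine setIntegral_congr_fun measurableSet_closedBall fun x hx => ?_
  simp [abs_of_pos (hdet x hx)]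

theorem no_contDiffOn_retraction_of_closedBall {R : ℝ} (hR : 0 < R) {U : Set E}
    (hU : IsOpen U) (hBU : closedBall 0 R ⊆ U) {r : E → E} (hr : ContDiffOn ℝ 1 r U)
    (hnorm : ∀ x ∈ U, ‖r x‖ = R) (hfix : ∀ x ∈ sphere (0 : E) R, r x = x) : False := by
  borelize E
  let μ : Measure E := .addHaar
  set B := closedBall (0 : E) R
  let A : E → E →L[ℝ] E := fun x => fderiv ℝ r x - 1
  have hr' : ∀ x ∈ U, HasStrictFDerivAt r (fderiv ℝ r x) x := fun x hx =>
    (hr.contDiffAt (hU.mem_nhds hx)).hasStrictFDerivAt one_ne_zero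
  have hAc : ContinuousOn A B :=
    ((hr.continuousOn_fderiv_of_isOpen hU le_rfl).sub continuousOn_const).mono hBU
  obtain ⟨K, hK⟩ := (isCompact_closedBall (0 : E) R).exists_bound_of_continuousOn hAc
  have hlip : LipschitzOnWith K.toNNReal (fun x => r x - x) B :=
    (convex_closedBall 0 R).lipschitzOnWith_of_nnnorm_hasFDerivWithin_le
      (fun x hx => ((hr' x (hBU hx)).hasFDerivAt.sub (hasFDerivAt_id x)).hasFDerivWithinAt)
      fun x hx => by rw [← NNReal.coe_le_coe, coe_nnnorm]; exact (hK x hx).trans (le_max_left _ _)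
  have hint : ∀ t : ℝ, Integrable (fun x => (1 + t • A x).det) (μ.restrict B) := fun t =>
    (ContinuousLinearMap.continuous_det.comp_continuousOn
      (continuousOn_const.add (hAc.const_smul t))).integrableOn_compact (isCompact_closedBall 0 R)
  obtain ⟨q, hq⟩ := exists_eval_eq_integral_of_natDegree_le (F := fun t x => (1 + t • A x).det)
    (fun x => LinearMap.exists_natDegree_le_eval_eq_det_one_add_smul (A x : E →ₗ[ℝ] E)) hint
  have hsmall : ∀ᶠ t in 𝓝[≥] (0 : ℝ), q.eval t = μ.real B := by
    have hK1 : ∀ᶠ t : ℝ in 𝓝 0, |t| * K.toNNReal < 1 :=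
      ((continuous_abs.mul continuous_const).tendsto' 0 0 (by simp)).eventually
        (gt_mem_nhds one_pos)
    filter_upwards [nhdsWithin_le_nhds (eventually_forall_det_one_add_smul_pos hK),
      nhdsWithin_le_nhds hK1, nhdsWithin_le_nhds (eventually_le_nhds one_pos),
      self_mem_nhdsWithin] with t hdet htK ht1 ht0
    rw [hq]
    exact setIntegral_det_one_add_smul_eq_measureReal μ hR (fun x hx => hr' x (hBU hx))
      (fun x hx => mem_closedBall_zero_iff.2 (hnorm x (hBU hx)).le) hfix hlip ⟨ht0, ht1⟩ htK hdet
  have hzero : q.eval 1 = 0 := by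
    rw [hq]
    refine setIntegral_eq_zero_of_forall_eq_zero fun x hx => ?_
    have hRx : r x ≠ 0 := norm_ne_zero_iff.1 ((hnorm x (hBU hx)).trans_ne hR.ne')
    rw [one_smul, add_sub_cancel]
    exact det_fderiv_eq_zero_of_eventually_norm_eq (hr' x (hBU hx)).differentiableAt
      (eventually_of_mem (hU.mem_nhds (hBU hx)) hnorm) hRx
  have hpos : 0 < μ.real B :=
    ENNReal.toReal_pos (measure_closedBall_pos μ 0 hR).ne' measure_closedBall_lt_top.ne
  rw [eq_C_of_eventually_eval_eq hsmall, eval_C] at hzero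
  exact hpos.ne' hzero

theorem exists_isFixedPt_of_contDiff_of_norm_lt {f : E → E} {R : ℝ} (hf : ContDiff ℝ 1 f)
    (hR : ∀ x, ‖f x‖ < R) : ∃ x, IsFixedPt f x := by
  by_contra! hfix
  have hR0 : 0 < R := (norm_nonneg _).trans_lt (hR 0)
  have hd : ContDiff ℝ 1 fun x => (x, x - f x) := contDiff_id.prodMk (contDiff_id.sub hf)
  refine no_contDiffOn_retraction_of_closedBall hR0
    (U := {x | 0 < sphereDiscr R x (x - f x)})
    (r := fun x => x + sphereHitTime R x (x - f x) • (x - f x))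
    (isOpen_lt continuous_const (contDiff_sphereDiscr.comp hd).continuous)
    (fun x hx => sphereDiscr_pos (mem_closedBall_zero_iff.1 hx) (hR x) (Ne.symm (hfix x)))
    (fun x hx => ?_) (fun x hx => ?_) (fun x hx => ?_)
  · exact (contDiffAt_id.add (((contDiffAt_sphereHitTime hx).comp x hd.contDiffAt).smul
      (contDiff_id.sub hf).contDiffAt)).contDiffWithinAt
  · exact norm_add_sphereHitTime_smul hR0.le (sub_ne_zero.2 (Ne.symm (hfix x))) hx.le
  · have hxR := mem_sphere_zero_iff_norm.1 hx
    simp [sphereHitTime_eq_zero hxR (inner_sub_pos_of_norm_lt (hxR ▸ hR x)).le]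

end Brouwer

theorem exists_isFixedPt_of_contDiff_of_isBounded {F : Type*} [NormedAddCommGroup F]
    [NormedSpace ℝ F] [FiniteDimensional ℝ F] {f : F → F} (hf : ContDiff ℝ 1 f)
    (hb : Bornology.IsBounded (range f)) : ∃ x, IsFixedPt f x := by
  let ψ := toEuclidean (E := F)
  have hb' : Bornology.IsBounded (range (ψ ∘ f ∘ ψ.symm)) := by
    rw [range_comp, ψ.symm.surjective.range_comp]
    exact ψ.lipschitz.isBounded_image hb
  obtain ⟨C, hC⟩ := isBounded_iff_forall_norm_le.1 hb'
  obtain ⟨y, hy⟩ := exists_isFixedPt_of_contDiff_of_norm_lt (R := C + 1)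
    (ψ.contDiff.comp (hf.comp ψ.symm.contDiff))
    fun y => (hC _ (mem_range_self y)).trans_lt (lt_add_one C)
  exact ⟨ψ.symm y, by simpa [IsFixedPt] using congrArg ψ.symm hy⟩

section Logit

variable {I : Type*} [Fintype I] [DecidableEq I] {A : I → Type*} [∀ i, Fintype (A i)]

theorem contDiff_actionUtility (u : I → (∀ j, A j) → ℝ) (i : I) (ai : A i)
    {n : WithTop ℕ∞} : ContDiff ℝ n fun pi : ∀ i, A i → ℝ => actionUtility u pi i ai := by
  unfold actionUtility
  exact ContDiff.sum fun aneg _ => (contDiff_prod fun j _ =>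
    contDiff_pi.1 (contDiff_pi.1 contDiff_id j.1) (aneg j)).mul contDiff_const

noncomputable def logitResponse (u : I → (∀ j, A j) → ℝ) (sigma : ℝ)
    (pi : ∀ i, A i → ℝ) (i : I) (ai : A i) : ℝ :=
  Real.exp (actionUtility u pi i ai / sigma) /
    ∑ ai' : A i, Real.exp (actionUtility u pi i ai' / sigma)

variable [∀ i, Nonempty (A i)] (u : I → (∀ j, A j) → ℝ) (sigma : ℝ)

theorem sum_exp_actionUtility_pos (pi : ∀ i, A i → ℝ) (i : I) :
    0 < ∑ ai : A i, Real.exp (actionUtility u pi i ai / sigma) :=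
  Finset.sum_pos (fun _ _ => Real.exp_pos _) Finset.univ_nonempty

theorem logitResponse_nonneg (pi : ∀ i, A i → ℝ) (i : I) (ai : A i) :
    0 ≤ logitResponse u sigma pi i ai := by
  unfold logitResponse
  positivity

theorem sum_logitResponse (pi : ∀ i, A i → ℝ) (i : I) :
    ∑ ai, logitResponse u sigma pi i ai = 1 := by
  simp only [logitResponse]
  rw [← Finset.sum_div, div_self (sum_exp_actionUtility_pos u sigma pi i).ne']

theorem logitResponse_le_one (pi : ∀ i, A i → ℝ) (i : I) (ai : A i) :
    logitResponse u sigma pi i ai ≤ 1 := by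
  rw [← sum_logitResponse u sigma pi i]
  exact Finset.single_le_sum (fun ai _ => logitResponse_nonneg u sigma pi i ai)
    (Finset.mem_univ ai)

theorem contDiff_logitResponse {n : WithTop ℕ∞} : ContDiff ℝ n (logitResponse u sigma) := by
  refine contDiff_pi.2 fun i => contDiff_pi.2 fun ai => ?_
  have hexp : ∀ ai', ContDiff ℝ n fun pi => Real.exp (actionUtility u pi i ai' / sigma) :=
    fun ai' => Real.contDiff_exp.comp ((contDiff_actionUtility u i ai').div_const sigma)
  exact (hexp ai).div (ContDiff.sum fun ai' _ => hexp ai')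
    fun pi => (sum_exp_actionUtility_pos u sigma pi i).ne'

theorem isBounded_range_logitResponse : Bornology.IsBounded (range (logitResponse u sigma)) := by
  refine (isBounded_closedBall (x := 0) (r := 1)).subset ?_
  rintro _ ⟨pi, rfl⟩
  refine mem_closedBall_zero_iff.2 ((pi_norm_le_iff_of_nonneg zero_le_one).2 fun i =>
    (pi_norm_le_iff_of_nonneg zero_le_one).2 fun ai => ?_)
  rw [Real.norm_eq_abs, abs_of_nonneg (logitResponse_nonneg u sigma pi i ai)]
  exact logitResponse_le_one u sigma pi i ai

end Logit

theorem exists_smooth_best_response_fixed_point_general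
    {I : Type*} [Fintype I] [DecidableEq I]
    {A : I → Type*} [∀ i, Fintype (A i)] [∀ i, Nonempty (A i)]
    (u : ∀ i : I, (∀ j, A j) → ℝ) (sigma : ℝ) :
    ∃ pi : ∀ i, A i → ℝ,
      (∀ i, (∀ ai, 0 ≤ pi i ai) ∧ ∑ ai, pi i ai = 1) ∧
      (∀ i, ∀ ai : A i,
        pi i ai = Real.exp (actionUtility u pi i ai / sigma) /
          ∑ ai' : A i, Real.exp (actionUtility u pi i ai' / sigma)) := by
  obtain ⟨pi, hpi⟩ := exists_isFixedPt_of_contDiff_of_isBounded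
    (contDiff_logitResponse u sigma (n := 1)) (isBounded_range_logitResponse u sigma)
  refine ⟨pi, fun i => ⟨fun ai => ?_, ?_⟩, fun i ai => (congrFun (congrFun hpi i) ai).symm⟩
  · rw [← hpi]
    exact logitResponse_nonneg u sigma pi i ai
  · rw [← hpi]
    exact sum_logitResponse u sigma pi i

/-- existence of a fixed point of the smooth best response (logit
quantal response equilibrium) in any finite normal-form game, for any
temperature `σ > 0`. -/
theorem exists_smooth_best_response_fixed_point
    {I : Type*} [Fintype I] [DecidableEq I] [Nonempty I]
    {A : I → Type*} [∀ i, Fintype (A i)] [∀ i, Nonempty (A i)]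
    (u : ∀ i : I, (∀ j, A j) → ℝ) (sigma : ℝ) (hsigma : 0 < sigma) :
    ∃ pi : ∀ i, A i → ℝ,
      (∀ i, (∀ ai, 0 ≤ pi i ai) ∧ ∑ ai, pi i ai = 1) ∧
      (∀ i, ∀ ai : A i,
        pi i ai = Real.exp (actionUtility u pi i ai / sigma) /
          ∑ ai' : A i, Real.exp (actionUtility u pi i ai' / sigma)) :=
  exists_smooth_best_response_fixed_point_general u sigma
end
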